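/- For any conformal point C = c + (1/2)c²n + n̄ lying on the plane of three points p₁, p₂, p₃ with plane bivector I_c, one has P₁∧P₂∧P₃∧n = C∧I_c∧n = (c∧I_c)n − I_c N; in particular if c∧I_c = 0 then P₁∧P₂∧P₃∧n = −I_c N. -/

import Mathlib

noncomputable section
open scoped RealInnerProductSpace

/-- Euclidean 3-space. -/
abbrev E3 : Type := EuclideanSpace ℝ (Fin 3)

/-- The 5-dimensional space ℝ^{4,1}: Euclidean part plus coefficients of the
null vectors n (infinity) and n̄ (origin). -/
abbrev V5 : Type := E3 × ℝ × ℝ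

/-- Symmetric bilinear form of signature (4,1):
`⟪p,q⟫` on the Euclidean part, and `n·n̄ = -1` on the null pair. -/
def B5 : LinearMap.BilinForm ℝ V5 := LinearMap.mk₂ ℝ
  (fun x y => ⟪x.1, y.1⟫ - x.2.1 * y.2.2 - x.2.2 * y.2.1)
  (fun m₁ m₂ y => by simp only [Prod.fst_add, Prod.snd_add, inner_add_left]; ring)
  (fun c m y => by simp only [Prod.smul_fst, Prod.smul_snd, smul_eq_mul, real_inner_smul_left]; ring)
  (fun m y₁ y₂ => by simp only [Prod.fst_add, Prod.snd_add, inner_add_right]; ring)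
  (fun c m y => by simp only [Prod.smul_fst, Prod.smul_snd, smul_eq_mul, real_inner_smul_right]; ring)

/-- The quadratic form of R_{4,1}. -/
def Q5 : QuadraticForm ℝ V5 := B5.toQuadraticMap

/-- The Clifford geometric algebra R_{4,1}. -/
abbrev Cl : Type := CliffordAlgebra Q5

def ι5 : V5 →ₗ[ℝ] Cl := CliffordAlgebra.ι Q5

/-- Embedding of a Euclidean vector as a grade-1 element. -/
def ev (p : E3) : Cl := ι5 (p, 0, 0)

/-- The null vector n representing infinity. -/
def nInf : Cl := ι5 (0, 1, 0)

/-- The null vector n̄ representing the origin. -/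
def nOri : Cl := ι5 (0, 0, 1)

/-- The conformal point P = p + (1/2)p² n + n̄. -/
def cpt (p : E3) : Cl := ι5 (p, ⟪p, p⟫ / 2, 1)

/-- Outer (wedge) product of two vectors (grade-1 elements): antisymmetrized
geometric product. -/
def w2 (a b : Cl) : Cl := (2:ℝ)⁻¹ • (a * b - b * a)

/-- Outer (wedge) product of three vectors. -/
def w3 (a b c : Cl) : Cl := (6:ℝ)⁻¹ •
  (a*b*c - a*c*b - b*a*c + b*c*a + c*a*b - c*b*a)

/-- Outer (wedge) product of a vector with a bivector. -/
def vwB (v B : Cl) : Cl := (2:ℝ)⁻¹ • (v * B + B * v)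

/-- Left contraction of a vector into a bivector. -/
def lcontr (v B : Cl) : Cl := (2:ℝ)⁻¹ • (v * B - B * v)

/-- The Minkowski plane bivector N = n ∧ n̄. -/
def Nb : Cl := w2 nInf nOri

/-- Outer (wedge) product of four vectors. -/
def w4 (a b c d : Cl) : Cl := (24:ℝ)⁻¹ •
  (a*b*c*d - a*b*d*c - a*c*b*d + a*c*d*b + a*d*b*c - a*d*c*b - b*a*c*d + b*a*d*c + b*c*a*d - b*c*d*a - b*d*a*c + b*d*c*a + c*a*b*d - c*a*d*b - c*b*a*d + c*b*d*a + c*d*a*b - c*d*b*a - d*a*b*c + d*a*c*b + d*b*a*c - d*b*c*a - d*c*a*b + d*c*b*a)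

/-! The wedge products `w2`, `w3`, `w4` are multilinear and alternating, so in `P₁∧P₂∧P₃∧n` every
`n`-component of the conformal points drops out and the common `n̄`-component only survives
against the differences `p₁ - p₂`, `p₂ - p₃`; this gives `p₁∧p₂∧p₃∧n + n̄∧(p₁-p₂)∧(p₂-p₃)∧n`.
Moving `p₁` inside its plane does not change `p₁∧(p₁-p₂)∧(p₂-p₃)`, so any point `c` of the plane
may replace it. Finally `n` and `n̄` anticommute with Euclidean vectors, which turns
`c∧I_c∧n` into `(c∧I_c) n` and `n̄∧I_c∧n` into `-I_c N`. -/

theorem mul_left_comm_of_anticomm {A : Type*} [Ring A] {a b : A} (h : a * b = -(b * a)) (w : A) :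
    a * (b * w) = -(b * (a * w)) := by
  rw [← mul_assoc, h, neg_mul, mul_assoc]

theorem mul_left_comm_of_eq_smul_one_sub {R A : Type*} [CommSemiring R] [Ring A] [Algebra R A]
    {a b : A} {r : R} (h : a * b = r • 1 - b * a) (w : A) :
    a * (b * w) = r • w - b * (a * w) := by
  rw [← mul_assoc, h, sub_mul, smul_mul_assoc, one_mul, mul_assoc]

theorem B5_apply (x y : V5) : B5 x y = ⟪x.1, y.1⟫ - x.2.1 * y.2.2 - x.2.2 * y.2.1 := rfl

theorem ι5_mul_ι5_swap (x y : V5) : ι5 y * ι5 x = (2 * B5 x y) • (1 : Cl) - ι5 x * ι5 y := by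
  have hpolar : QuadraticMap.polar Q5 y x = 2 * B5 x y := by
    rw [Q5, LinearMap.BilinMap.polar_toQuadraticMap, B5_apply, B5_apply, real_inner_comm]
    ring
  rw [ι5, CliffordAlgebra.ι_mul_ι_comm, hpolar, Algebra.algebraMap_eq_smul_one]

theorem nInf_mul_ev (p : E3) : nInf * ev p = -(ev p * nInf) := by
  rw [nInf, ev, ι5_mul_ι5_swap]
  simp [B5_apply]

theorem nOri_mul_ev (p : E3) : nOri * ev p = -(ev p * nOri) := by
  rw [nOri, ev, ι5_mul_ι5_swap]
  simp [B5_apply]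

theorem ev_mul_ev_swap (p q : E3) : ev q * ev p = (2 * ⟪p, q⟫) • (1 : Cl) - ev p * ev q := by
  rw [ev, ev, ι5_mul_ι5_swap]
  simp [B5_apply]

theorem nOri_mul_nInf : nOri * nInf = (-2 : ℝ) • (1 : Cl) - nInf * nOri := by
  rw [nOri, nInf, ι5_mul_ι5_swap]
  simp [B5_apply]

theorem ev_add (p q : E3) : ev (p + q) = ev p + ev q := by
  simp only [ev, ← map_add, Prod.mk_add_mk, add_zero]

theorem ev_sub (p q : E3) : ev (p - q) = ev p - ev q := by
  simp only [ev, ← map_sub, Prod.mk_sub_mk, sub_zero]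

theorem ev_smul (r : ℝ) (p : E3) : ev (r • p) = r • ev p := by
  simp only [ev, ← map_smul, Prod.smul_mk, smul_zero]

theorem cpt_eq (p : E3) : cpt p = ev p + (⟪p, p⟫ / 2) • nInf + nOri := by
  simp only [cpt, ev, nInf, nOri, ← map_smul, ← map_add, Prod.smul_mk, Prod.mk_add_mk]
  congr 1
  simp

section Wedge

set_option maxHeartbeats 1000000

theorem w4_add_smul_add_const (a b d n m : Cl) (α β γ : ℝ) :
    w4 (a + α • n + m) (b + β • n + m) (d + γ • n + m) n = w4 a b d n + w4 m (a - b) (b - d) n := by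
  simp only [w4, mul_add, add_mul, mul_sub, sub_mul, smul_add, smul_sub, smul_smul,
    mul_smul_comm, smul_mul_assoc, mul_assoc]
  module

theorem w4_add_smul_add_left (x u v n m : Cl) (κ : ℝ) :
    w4 (x + κ • n + m) u v n = w4 x u v n + w4 m u v n := by
  simp only [w4, mul_add, add_mul, smul_add, smul_smul, mul_smul_comm, smul_mul_assoc, mul_assoc]
  module

theorem w4_affineCombination_left (a b d n : Cl) (s t : ℝ) :
    w4 (a + s • (b - a) + t • (d - a)) (a - b) (b - d) n = w4 a b d n := by
  simp only [w4, mul_add, add_mul, mul_sub, sub_mul, smul_add, smul_sub, smul_smul,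
    mul_smul_comm, smul_mul_assoc, mul_assoc]
  module

theorem w4_eq_w3_mul_of_anticomm (x u v n : Cl)
    (hx : n * x = -(x * n)) (hu : n * u = -(u * n)) (hv : n * v = -(v * n)) :
    w4 x u v n = w3 x u v * n := by
  simp only [w4, w3, add_mul, sub_mul, mul_neg, neg_mul, neg_neg, smul_mul_assoc, mul_assoc,
    hx, hu, hv]
  module

theorem w3_eq_vwB_w2 (x u v : Cl) (r s : ℝ)
    (hu : u * x = r • (1 : Cl) - x * u) (hv : v * x = s • (1 : Cl) - x * v) :
    w3 x u v = vwB x (w2 u v) := by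
  simp only [w3, vwB, w2, mul_sub, sub_mul, smul_add, smul_sub, smul_smul, mul_smul_comm,
    smul_mul_assoc, mul_one, one_mul, mul_assoc, hu, hv, mul_left_comm_of_eq_smul_one_sub hu,
    mul_left_comm_of_eq_smul_one_sub hv]
  module

theorem w4_eq_neg_w2_mul_w2 (u v n m : Cl) (r q : ℝ)
    (hnu : n * u = -(u * n)) (hnv : n * v = -(v * n)) (hmu : m * u = -(u * m))
    (hmv : m * v = -(v * m)) (hmn : m * n = r • (1 : Cl) - n * m)
    (hvu : v * u = q • (1 : Cl) - u * v) :
    w4 m u v n = -(w2 u v * w2 n m) := by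
  simp only [w4, w2, mul_sub, sub_mul, mul_neg, neg_mul, neg_neg,
    smul_sub, smul_smul, mul_smul_comm, smul_mul_assoc, mul_one, one_mul,
    mul_assoc, hnu, hnv, hmu, hmv, hmn, hvu, mul_left_comm_of_anticomm hnu,
    mul_left_comm_of_anticomm hnv, mul_left_comm_of_eq_smul_one_sub hvu]
  module

end Wedge

theorem plane_alt_parametrization_general (p₁ p₂ p₃ : E3)
    (Ic : Cl) (hIc : Ic = w2 (ev (p₁ - p₂)) (ev (p₂ - p₃)))
    (c : E3) (hc : ∃ s t : ℝ, c = p₁ + s • (p₂ - p₁) + t • (p₃ - p₁)) :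
    w4 (cpt p₁) (cpt p₂) (cpt p₃) nInf =
        w4 (cpt c) (ev (p₁ - p₂)) (ev (p₂ - p₃)) nInf ∧
    w4 (cpt p₁) (cpt p₂) (cpt p₃) nInf =
        vwB (ev c) Ic * nInf - Ic * Nb ∧
    (vwB (ev c) Ic = 0 →
      w4 (cpt p₁) (cpt p₂) (cpt p₃) nInf = -(Ic * Nb)) := by
  obtain ⟨s, t, hcst⟩ := hc
  have hevc : ev c = ev p₁ + s • (ev p₂ - ev p₁) + t • (ev p₃ - ev p₁) := by
    rw [hcst, ev_add, ev_add, ev_smul, ev_smul, ev_sub, ev_sub]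
  have hplane : w4 (cpt p₁) (cpt p₂) (cpt p₃) nInf =
      w4 (cpt c) (ev (p₁ - p₂)) (ev (p₂ - p₃)) nInf := by
    rw [cpt_eq p₁, cpt_eq p₂, cpt_eq p₃, cpt_eq c, w4_add_smul_add_const, w4_add_smul_add_left,
      ev_sub, ev_sub, hevc, w4_affineCombination_left]
  have hsplit : w4 (cpt p₁) (cpt p₂) (cpt p₃) nInf = vwB (ev c) Ic * nInf - Ic * Nb := by
    rw [hplane, hIc, cpt_eq c, w4_add_smul_add_left,
      w4_eq_w3_mul_of_anticomm _ _ _ _ (nInf_mul_ev c) (nInf_mul_ev _) (nInf_mul_ev _),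
      w3_eq_vwB_w2 _ _ _ _ _ (ev_mul_ev_swap c _) (ev_mul_ev_swap c _),
      w4_eq_neg_w2_mul_w2 _ _ _ _ _ _ (nInf_mul_ev _) (nInf_mul_ev _) (nOri_mul_ev _)
        (nOri_mul_ev _) nOri_mul_nInf (ev_mul_ev_swap _ _), Nb, ← sub_eq_add_neg]
  exact ⟨hplane, hsplit, fun h => by rw [hsplit, h, zero_mul, zero_sub]⟩

/-- alternative parametrization of the plane by any conformal
point C on it: P₁∧P₂∧P₃∧n = C∧I_c∧n = (c∧I_c)n − I_c N; and if c∧I_c = 0 then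
it equals −I_c N. -/
theorem plane_alt_parametrization (p₁ p₂ p₃ : E3)
    (Ic : Cl) (hIc : Ic = w2 (ev (p₁ - p₂)) (ev (p₂ - p₃))) (hIc0 : Ic ≠ 0)
    (c : E3) (hc : ∃ s t : ℝ, c = p₁ + s • (p₂ - p₁) + t • (p₃ - p₁)) :
    w4 (cpt p₁) (cpt p₂) (cpt p₃) nInf =
        w4 (cpt c) (ev (p₁ - p₂)) (ev (p₂ - p₃)) nInf ∧
    w4 (cpt p₁) (cpt p₂) (cpt p₃) nInf =
        vwB (ev c) Ic * nInf - Ic * Nb ∧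
    (vwB (ev c) Ic = 0 →
      w4 (cpt p₁) (cpt p₂) (cpt p₃) nInf = -(Ic * Nb)) :=
  plane_alt_parametrization_general p₁ p₂ p₃ Ic hIc c hc
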